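/- arXiv:2209.06200 — 2 statements merged into one kernel-verified Lean document; each statement's English description precedes it below -/
import Mathlib

section
/- Composition rule for resolvent compositions: for Q : H → G and L : G → K bounded linear and B : K → 2^K set-valued, Q ▷ (L ▷ B) = (L ∘ Q) ▷ B. -/
open scoped RealInnerProductSpace

noncomputable section

/-- Inverse of a set-valued operator. -/
def svInv {α β : Type*} (A : α → Set β) : β → Set α := fun y => {x | y ∈ A x}

/-- `A + Id`. -/
def plusId {E : Type*} [AddGroup E] (A : E → Set E) : E → Set E :=
  fun x => (fun u => u + x) '' A x

/-- `A - Id`. -/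
def minusId {E : Type*} [AddGroup E] (A : E → Set E) : E → Set E :=
  fun x => (fun u => u - x) '' A x

/-- Resolvent `J_A = (A + Id)⁻¹`. -/
def svResolvent {E : Type*} [AddGroup E] (A : E → Set E) : E → Set E :=
  svInv (plusId A)

/-- `L* ∘ A ∘ L` as a set-valued operator. -/
def svComp {H G : Type*} [NormedAddCommGroup H] [InnerProductSpace ℝ H] [CompleteSpace H]
    [NormedAddCommGroup G] [InnerProductSpace ℝ G] [CompleteSpace G]
    (L : H →L[ℝ] G) (A : G → Set G) : H → Set H :=
  fun x => (ContinuousLinearMap.adjoint L) '' A (L x)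

/-- Parallel composition `L* ▹ A = (L* ∘ A⁻¹ ∘ L)⁻¹`. -/
def parComp {H G : Type*} [NormedAddCommGroup H] [InnerProductSpace ℝ H] [CompleteSpace H]
    [NormedAddCommGroup G] [InnerProductSpace ℝ G] [CompleteSpace G]
    (L : H →L[ℝ] G) (A : G → Set G) : H → Set H :=
  svInv (svComp L (svInv A))

/-- Resolvent composition `L ▷ B = L* ▹ (B + Id) - Id`. -/
def rcomp {H G : Type*} [NormedAddCommGroup H] [InnerProductSpace ℝ H] [CompleteSpace H]
    [NormedAddCommGroup G] [InnerProductSpace ℝ G] [CompleteSpace G]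
    (L : H →L[ℝ] G) (B : G → Set G) : H → Set H :=
  minusId (parComp L (plusId B))

/-- Resolvent cocomposition `L ▶ B = (L ▷ B⁻¹)⁻¹`. -/
def ccomp {H G : Type*} [NormedAddCommGroup H] [InnerProductSpace ℝ H] [CompleteSpace H]
    [NormedAddCommGroup G] [InnerProductSpace ℝ G] [CompleteSpace G]
    (L : H →L[ℝ] G) (B : G → Set G) : H → Set H :=
  svInv (rcomp L (svInv B))

/-- Monotonicity of a set-valued operator. -/
def SVMonotone {E : Type*} [NormedAddCommGroup E] [InnerProductSpace ℝ E]
    (A : E → Set E) : Prop :=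
  ∀ x₁ u₁ x₂ u₂, u₁ ∈ A x₁ → u₂ ∈ A x₂ → 0 ≤ ⟪x₁ - x₂, u₁ - u₂⟫

/-- Maximal monotonicity of a set-valued operator. -/
def SVMaxMonotone {E : Type*} [NormedAddCommGroup E] [InnerProductSpace ℝ E]
    (A : E → Set E) : Prop :=
  SVMonotone A ∧ ∀ x u, (∀ y v, v ∈ A y → 0 ≤ ⟪x - y, u - v⟫) → u ∈ A x

variable {H G K : Type*}
  [NormedAddCommGroup H] [InnerProductSpace ℝ H] [CompleteSpace H]
  [NormedAddCommGroup G] [InnerProductSpace ℝ G] [CompleteSpace G]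
  [NormedAddCommGroup K] [InnerProductSpace ℝ K] [CompleteSpace K]

theorem svInv_svInv {α β : Type*} (A : α → Set β) : svInv (svInv A) = A := rfl

theorem plusId_minusId {E : Type*} [AddGroup E] (A : E → Set E) : plusId (minusId A) = A := by
  funext x
  simp only [plusId, minusId, Set.image_image, sub_add_cancel, Set.image_id']

theorem svComp_svComp (Q : H →L[ℝ] G) (L : G →L[ℝ] K) (A : K → Set K) :
    svComp Q (svComp L A) = svComp (L.comp Q) A := by
  funext x
  simp only [svComp, Set.image_image, ContinuousLinearMap.adjoint_comp,
    ContinuousLinearMap.coe_comp, Function.comp_apply]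

theorem parComp_parComp (Q : H →L[ℝ] G) (L : G →L[ℝ] K) (A : K → Set K) :
    parComp Q (parComp L A) = parComp (L.comp Q) A := by
  rw [parComp, parComp, svInv_svInv, svComp_svComp, parComp]

/-- `Q ▷ (L ▷ B) = (L ∘ Q) ▷ B`. -/
theorem rcomp_rcomp (Q : H →L[ℝ] G) (L : G →L[ℝ] K) (B : K → Set K) :
    rcomp Q (rcomp L B) = rcomp (L.comp Q) B := by
  rw [rcomp, rcomp, plusId_minusId, parComp_parComp, rcomp]
end
end

section
/- If ‖L‖ ≤ 1, L is injective, and B : G → 2^G is maximally monotone and injective (Bx₁ ∩ Bx₂ ≠ ∅ implies x₁ = x₂), then the resolvent composition L ▷ B is injective. -/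
/-! If `u ∈ (L ▷ B) xᵢ`, then `xᵢ = L† vᵢ` with `bᵢ := L (u + xᵢ) - vᵢ ∈ B vᵢ`, and
`b₁ - b₂ = T v - v` for the contraction `T = L L†` and `v = v₁ - v₂`. Monotonicity of `B`
gives `⟪v, T v - v⟫ ≥ 0`, which a contraction only allows when `T v = v`. Hence `b₁ = b₂`,
injectivity of `B` gives `v₁ = v₂`, and `x₁ = L† v₁ = x₂`. -/

open scoped RealInnerProductSpace

noncomputable section

variable {H G : Type*}
  [NormedAddCommGroup H] [InnerProductSpace ℝ H] [CompleteSpace H]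
  [NormedAddCommGroup G] [InnerProductSpace ℝ G] [CompleteSpace G]

open scoped InnerProduct

theorem ContinuousLinearMap.apply_eq_self_of_inner_sub_nonneg {E : Type*}
    [NormedAddCommGroup E] [InnerProductSpace ℝ E] {T : E →L[ℝ] E} (hT : ‖T‖ ≤ 1) {v : E}
    (hv : 0 ≤ ⟪v, T v - v⟫) : T v = v := by
  have hTv : ‖T v‖ ≤ ‖v‖ := T.le_of_opNorm_le hT v |>.trans_eq (one_mul _)
  have hsq : ‖T v - v‖ ^ 2 ≤ 0 := by
    rw [inner_sub_right, real_inner_self_eq_norm_sq, real_inner_comm] at hv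
    rw [norm_sub_sq_real]
    nlinarith [norm_nonneg (T v)]
  rw [← sub_eq_zero, ← norm_eq_zero, ← sq_eq_zero_iff]
  exact hsq.antisymm (sq_nonneg _)

theorem mem_rcomp_iff {L : H →L[ℝ] G} {B : G → Set G} {x u : H} :
    u ∈ rcomp L B x ↔ ∃ v, (L†) v = x ∧ L (u + x) - v ∈ B v := by
  simp only [rcomp, minusId, parComp, svInv, svComp, plusId, Set.mem_image, Set.mem_ofPred_eq]
  constructor
  · rintro ⟨w, ⟨v, ⟨b, hb, hbv⟩, hvx⟩, rfl⟩
    refine ⟨v, hvx, ?_⟩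
    rwa [sub_add_cancel, ← hbv, add_sub_cancel_right]
  · rintro ⟨v, hvx, hb⟩
    exact ⟨u + x, ⟨v, ⟨_, hb, sub_add_cancel _ _⟩, hvx⟩, add_sub_cancel_right u x⟩

theorem rcomp_injective_general (L : H →L[ℝ] G) (hL : ‖L‖ ≤ 1)
    (B : G → Set G) (hB : SVMaxMonotone B)
    (hBinj : ∀ y₁ y₂, (B y₁ ∩ B y₂).Nonempty → y₁ = y₂) :
    ∀ x₁ x₂, (rcomp L B x₁ ∩ rcomp L B x₂).Nonempty → x₁ = x₂ := by
  rintro x₁ x₂ ⟨u, hu₁, hu₂⟩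
  obtain ⟨v₁, rfl, hb₁⟩ := mem_rcomp_iff.mp hu₁
  obtain ⟨v₂, rfl, hb₂⟩ := mem_rcomp_iff.mp hu₂
  set T := L ∘L L†
  have hT : ‖T‖ ≤ 1 := calc
    ‖T‖ ≤ ‖L‖ * ‖L†‖ := L.opNorm_comp_le _
    _ = ‖L‖ * ‖L‖ := by rw [LinearIsometryEquiv.norm_map]
    _ ≤ 1 := mul_le_one₀ hL (norm_nonneg L) hL
  have hdiff : (L (u + (L†) v₁) - v₁) - (L (u + (L†) v₂) - v₂) = T (v₁ - v₂) - (v₁ - v₂) := by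
    simp only [T, ContinuousLinearMap.comp_apply, map_add, map_sub]
    abel
  have hfix : T (v₁ - v₂) = v₁ - v₂ :=
    T.apply_eq_self_of_inner_sub_nonneg hT (hdiff ▸ hB.1 _ _ _ _ hb₁ hb₂)
  have hb : L (u + (L†) v₁) - v₁ = L (u + (L†) v₂) - v₂ := by
    rwa [← sub_eq_zero, hdiff, sub_eq_zero]
  rw [hBinj v₁ v₂ ⟨_, hb₁, hb ▸ hb₂⟩]

/-- If `‖L‖ ≤ 1`, `L` is injective, and `B` is maximally monotone and injective,
then `L ▷ B` is injective. -/
theorem rcomp_injective (L : H →L[ℝ] G) (hL : ‖L‖ ≤ 1)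
    (hinj : Function.Injective L) (B : G → Set G) (hB : SVMaxMonotone B)
    (hBinj : ∀ y₁ y₂, (B y₁ ∩ B y₂).Nonempty → y₁ = y₂) :
    ∀ x₁ x₂, (rcomp L B x₁ ∩ rcomp L B x₂).Nonempty → x₁ = x₂ :=
  rcomp_injective_general L hL B hB hBinj
end
end
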